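/- Let n ≥ 1, let γ be a real symmetric positive definite n×n matrix, let S be a real antisymmetric n×n matrix (Sᵀ = −S), and set γ̃ = γ + S. Then the matrix-valued function y ↦ exp(−yγ̃) γ exp(−yγ̃ᵀ) is Bochner integrable on [0, ∞), and 2 ∫₀^∞ exp(−yγ̃) γ exp(−yγ̃ᵀ) dy = I, the n×n identity matrix. (This is the identity G_{kl}^{ab} Σ_{ab} = k_B T δ_{kl} underlying the simplification of the noise-induced drift when the fluctuation–dissipation relation Σ = 2 k_B T γ holds and A = I.) -/

import Mathlib

open Matrix MeasureTheory
open scoped Matrix.Norms.L2Operator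

open Filter Topology
open scoped RealInnerProductSpace

/-!
Write `A = γ + S`. As `S` is antisymmetric, `⟪x, A x⟫ = ⟪x, γ x⟫ ≥ μ ‖x‖²` for some `μ > 0`, and the
same holds for `Aᵀ = γ - S`; since `e^{2μt} ‖e^{-tA} x‖²` is then nonincreasing,
`‖e^{-tA}‖, ‖e^{-tAᵀ}‖ ≤ e^{-μt}`. As `A + Aᵀ = 2γ`, twice the integrand is the derivative of
`-e^{-yA} e^{-yAᵀ}`, which is `-1` at `y = 0` and tends to `0`.
-/

section InnerProductSpace

variable {E : Type*} [NormedAddCommGroup E] [InnerProductSpace ℝ E]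

theorem exists_pos_mul_norm_sq_le_inner [FiniteDimensional ℝ E] (T : E →L[ℝ] E)
    (hT : ∀ x ≠ 0, 0 < ⟪x, T x⟫) : ∃ μ > 0, ∀ x, μ * ‖x‖ ^ 2 ≤ ⟪x, T x⟫ := by
  cases subsingleton_or_nontrivial E with
  | inl _ => exact ⟨1, one_pos, fun x => by simp [Subsingleton.elim x 0]⟩
  | inr _ =>
    have hcont : Continuous fun x : E => ⟪x, T x⟫ := by fun_prop
    obtain ⟨x₀, hx₀, hmin⟩ := (isCompact_sphere (0 : E) 1).exists_isMinOn
      (NormedSpace.sphere_nonempty.mpr zero_le_one) hcont.continuousOn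
    refine ⟨⟪x₀, T x₀⟫, hT x₀ (ne_zero_of_mem_unit_sphere ⟨x₀, hx₀⟩), fun x => ?_⟩
    rcases eq_or_ne x 0 with rfl | hx
    · simp
    have hnx : ‖x‖ ≠ 0 := norm_ne_zero_iff.mpr hx
    set v := ‖x‖⁻¹ • x
    have hv : v ∈ Metric.sphere (0 : E) 1 := by simp [v, norm_smul, hnx]
    have hxv : ⟪x, T x⟫ = ‖x‖ ^ 2 * ⟪v, T v⟫ := by
      simp only [v, map_smul, inner_smul_left, inner_smul_right, RCLike.conj_to_real]
      field_simp
    rw [hxv, mul_comm]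
    exact mul_le_mul_of_nonneg_left (hmin hv) (sq_nonneg _)

variable [CompleteSpace E] {B : E →L[ℝ] E} {μ : ℝ}

theorem antitone_exp_mul_norm_sq_exp_neg_smul_apply (h : ∀ x, μ * ‖x‖ ^ 2 ≤ ⟪x, B x⟫) (x : E) :
    Antitone fun t : ℝ => Real.exp (2 * μ * t) * ‖NormedSpace.exp (-(t • B)) x‖ ^ 2 := by
  set u : ℝ → E := fun t => NormedSpace.exp (-(t • B)) x
  have hu : ∀ t, HasDerivAt u (-B (u t)) t := fun t => by
    simpa [u, smul_neg] using
      (hasDerivAt_exp_smul_const' (𝕂 := ℝ) (-B) t).clm_apply (hasDerivAt_const t x)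
  have hφ : ∀ t, HasDerivAt (fun t => Real.exp (2 * μ * t) * ‖u t‖ ^ 2)
      (2 * Real.exp (2 * μ * t) * (μ * ‖u t‖ ^ 2 - ⟪u t, B (u t)⟫)) t := fun t => by
    have he : HasDerivAt (fun t => Real.exp (2 * μ * t)) (Real.exp (2 * μ * t) * (2 * μ)) t := by
      simpa using ((hasDerivAt_id t).const_mul (2 * μ)).exp
    exact (he.mul (hu t).norm_sq).congr_deriv (by rw [inner_neg_right]; ring)
  refine antitone_of_deriv_nonpos (fun t => (hφ t).differentiableAt) fun t => ?_
  rw [(hφ t).deriv]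
  exact mul_nonpos_of_nonneg_of_nonpos (by positivity) (sub_nonpos.mpr (h (u t)))

theorem norm_exp_neg_smul_le_of_coercive (h : ∀ x, μ * ‖x‖ ^ 2 ≤ ⟪x, B x⟫) {y : ℝ}
    (hy : 0 ≤ y) : ‖NormedSpace.exp (-(y • B))‖ ≤ Real.exp (-(μ * y)) := by
  refine ContinuousLinearMap.opNorm_le_bound _ (by positivity) fun x => ?_
  have hsq : (Real.exp (μ * y) * ‖NormedSpace.exp (-(y • B)) x‖) ^ 2 ≤ ‖x‖ ^ 2 := by
    simpa [mul_pow, ← Real.exp_nat_mul, ← mul_assoc, mul_comm _ μ]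
      using antitone_exp_mul_norm_sq_exp_neg_smul_apply h x hy
  rw [Real.exp_neg, inv_mul_eq_div, le_div_iff₀' (Real.exp_pos _)]
  exact (pow_le_pow_iff_left₀ (by positivity) (norm_nonneg x) two_ne_zero).mp hsq

end InnerProductSpace

section BanachAlgebra

variable {𝔸 : Type*} [NormedRing 𝔸] [NormedAlgebra ℝ 𝔸] {A B : 𝔸} {μ : ℝ}

theorem norm_exp_neg_smul_mul_mul_exp_neg_smul_le
    (hA : ∀ y ≥ 0, ‖NormedSpace.exp (-(y • A))‖ ≤ Real.exp (-(μ * y)))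
    (hB : ∀ y ≥ 0, ‖NormedSpace.exp (-(y • B))‖ ≤ Real.exp (-(μ * y))) (C : 𝔸) {y : ℝ}
    (hy : 0 ≤ y) :
    ‖NormedSpace.exp (-(y • A)) * C * NormedSpace.exp (-(y • B))‖ ≤
      ‖C‖ * Real.exp (-(2 * μ * y)) :=
  calc _ ≤ ‖NormedSpace.exp (-(y • A))‖ * ‖C‖ * ‖NormedSpace.exp (-(y • B))‖ :=
        norm_mul₃_le
    _ ≤ Real.exp (-(μ * y)) * ‖C‖ * Real.exp (-(μ * y)) := by
        gcongr
        exacts [hA y hy, hB y hy]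
    _ = ‖C‖ * Real.exp (-(2 * μ * y)) := by
        rw [mul_right_comm, ← Real.exp_add]; ring_nf

variable [CompleteSpace 𝔸]

theorem hasDerivAt_neg_exp_neg_smul_mul_exp_neg_smul (t : ℝ) :
    HasDerivAt (fun y : ℝ => -(NormedSpace.exp (-(y • A)) * NormedSpace.exp (-(y • B))))
      (NormedSpace.exp (-(t • A)) * (A + B) * NormedSpace.exp (-(t • B))) t := by
  have hA := hasDerivAt_exp_smul_const (𝕂 := ℝ) (-A) t
  have hB := hasDerivAt_exp_smul_const' (𝕂 := ℝ) (-B) t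
  simp only [smul_neg] at hA hB
  exact (hA.mul hB).neg.congr_deriv (by noncomm_ring)

theorem integrableOn_exp_neg_smul_mul_mul_exp_neg_smul (hμ : 0 < μ)
    (hA : ∀ y ≥ 0, ‖NormedSpace.exp (-(y • A))‖ ≤ Real.exp (-(μ * y)))
    (hB : ∀ y ≥ 0, ‖NormedSpace.exp (-(y • B))‖ ≤ Real.exp (-(μ * y))) (C : 𝔸) :
    IntegrableOn (fun y : ℝ => NormedSpace.exp (-(y • A)) * C * NormedSpace.exp (-(y • B)))
      (Set.Ici 0) := by
  have hcont : Continuous fun y : ℝ =>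
      NormedSpace.exp (-(y • A)) * C * NormedSpace.exp (-(y • B)) := by
    simp only [← smul_neg]
    exact ((differentiable_exp_smul_const ℝ (-A)).continuous.mul continuous_const).mul
      (differentiable_exp_smul_const ℝ (-B)).continuous
  have hdom : IntegrableOn (fun y : ℝ => ‖C‖ * Real.exp (-(2 * μ * y))) (Set.Ici 0) := by
    have := (exp_neg_integrableOn_Ioi 0 (by positivity : 0 < 2 * μ)).const_mul ‖C‖
    simp only [neg_mul] at this
    exact (integrableOn_Ici_iff_integrableOn_Ioi).mpr this
  refine hdom.mono' hcont.aestronglyMeasurable ?_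
  exact (ae_restrict_iff' measurableSet_Ici).mpr
    (.of_forall fun y hy => norm_exp_neg_smul_mul_mul_exp_neg_smul_le hA hB C hy)

theorem integral_exp_neg_smul_mul_add_mul_exp_neg_smul (hμ : 0 < μ)
    (hA : ∀ y ≥ 0, ‖NormedSpace.exp (-(y • A))‖ ≤ Real.exp (-(μ * y)))
    (hB : ∀ y ≥ 0, ‖NormedSpace.exp (-(y • B))‖ ≤ Real.exp (-(μ * y))) :
    ∫ y in Set.Ici (0 : ℝ), NormedSpace.exp (-(y • A)) * (A + B) * NormedSpace.exp (-(y • B)) =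
      1 := by
  have hlim : Tendsto (fun y : ℝ => -(NormedSpace.exp (-(y • A)) * NormedSpace.exp (-(y • B))))
      atTop (𝓝 0) := by
    refine squeeze_zero_norm' ?_ ((Real.tendsto_exp_neg_atTop_nhds_zero.comp
      (tendsto_id.const_mul_atTop (by positivity : 0 < 2 * μ))).const_mul ‖(1 : 𝔸)‖ |>.trans_eq ?_)
    · filter_upwards [eventually_ge_atTop 0] with y hy
      simpa [norm_neg] using norm_exp_neg_smul_mul_mul_exp_neg_smul_le hA hB 1 hy
    · simp
  rw [integral_Ici_eq_integral_Ioi, integral_Ioi_of_hasDerivAt_of_tendsto'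
    (fun t _ => hasDerivAt_neg_exp_neg_smul_mul_exp_neg_smul t)
    ((integrableOn_exp_neg_smul_mul_mul_exp_neg_smul hμ hA hB _).mono_set Set.Ioi_subset_Ici_self)
    hlim]
  simp

end BanachAlgebra

namespace Matrix

variable {ι : Type*} [Fintype ι]

theorem dotProduct_mulVec_self_eq_zero_of_transpose_eq_neg {R : Type*} [CommRing R]
    [IsAddTorsionFree R] {S : Matrix ι ι R} (hS : Sᵀ = -S) (v : ι → R) : v ⬝ᵥ S *ᵥ v = 0 := by
  refine self_eq_neg.mp ?_
  calc v ⬝ᵥ S *ᵥ v = Sᵀ *ᵥ v ⬝ᵥ v := by rw [dotProduct_mulVec, mulVec_transpose]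
    _ = -(v ⬝ᵥ S *ᵥ v) := by rw [hS, neg_mulVec, neg_dotProduct, dotProduct_comm]

variable [DecidableEq ι]

theorem toEuclideanCLM_exp {𝕜 : Type*} [RCLike 𝕜] (A : Matrix ι ι 𝕜) :
    toEuclideanCLM (𝕜 := 𝕜) (NormedSpace.exp A) = NormedSpace.exp (toEuclideanCLM (𝕜 := 𝕜) A) :=
  NormedSpace.map_exp_of_mem_ball (𝕂 := 𝕜) _
    (AddMonoidHomClass.isometry_of_norm _ l2_opNorm_toEuclideanCLM).continuous A
    (by simp [NormedSpace.expSeries_radius_eq_top])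

theorem norm_exp_neg_smul_le_of_coercive {M : Matrix ι ι ℝ} {μ : ℝ}
    (h : ∀ x : EuclideanSpace ℝ ι, μ * ‖x‖ ^ 2 ≤ ⟪x, toEuclideanCLM (𝕜 := ℝ) M x⟫) {y : ℝ}
    (hy : 0 ≤ y) : ‖NormedSpace.exp (-(y • M))‖ ≤ Real.exp (-(μ * y)) := by
  rw [cstar_norm_def, toEuclideanCLM_exp, map_neg, map_smul]
  exact _root_.norm_exp_neg_smul_le_of_coercive h hy

theorem PosDef.exists_pos_forall_norm_exp_neg_smul_add_le {γ : Matrix ι ι ℝ} (hγ : γ.PosDef) :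
    ∃ μ > 0, ∀ S : Matrix ι ι ℝ, Sᵀ = -S → ∀ y ≥ 0,
      ‖NormedSpace.exp (-(y • (γ + S)))‖ ≤ Real.exp (-(μ * y)) := by
  obtain ⟨μ, hμ, hcoer⟩ := exists_pos_mul_norm_sq_le_inner (toEuclideanCLM (𝕜 := ℝ) γ)
    fun x hx => by simpa [inner_toEuclideanCLM] using hγ.dotProduct_mulVec_pos (by simpa using hx)
  refine ⟨μ, hμ, fun S hS y hy => norm_exp_neg_smul_le_of_coercive (fun x => ?_) hy⟩
  rw [map_add, _root_.add_apply, inner_add_right, inner_toEuclideanCLM S,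
    dotProduct_mulVec_self_eq_zero_of_transpose_eq_neg hS, add_zero]
  exact hcoer x

end Matrix

theorem fluctuation_dissipation_identity_general
    (n : ℕ) (γ' S : Matrix (Fin n) (Fin n) ℝ)
    (hγ : γ'.PosDef) (hS : Sᵀ = -S) :
    IntegrableOn
      (fun y : ℝ => NormedSpace.exp (-(y • (γ' + S))) * γ' *
        NormedSpace.exp (-(y • (γ' + S)ᵀ))) (Set.Ici 0) ∧
    (2 : ℝ) • (∫ y in Set.Ici (0 : ℝ),
        NormedSpace.exp (-(y • (γ' + S))) * γ' * NormedSpace.exp (-(y • (γ' + S)ᵀ))) =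
      (1 : Matrix (Fin n) (Fin n) ℝ) := by
  obtain ⟨μ, hμ, hdecay⟩ := hγ.exists_pos_forall_norm_exp_neg_smul_add_le
  have htranspose : (γ' + S)ᵀ = γ' + -S := by
    rw [transpose_add, hS, ← conjTranspose_eq_transpose_of_trivial, hγ.isHermitian.eq]
  have hA := hdecay S hS
  have hAt := htranspose ▸ hdecay (-S) (by rw [transpose_neg, hS])
  have hsum : (γ' + S) + (γ' + S)ᵀ = (2 : ℝ) • γ' := by
    rw [htranspose, two_smul]
    abel
  refine ⟨integrableOn_exp_neg_smul_mul_mul_exp_neg_smul hμ hA hAt γ', ?_⟩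
  rw [← integral_smul, ← integral_exp_neg_smul_mul_add_mul_exp_neg_smul hμ hA hAt, hsum]
  simp_rw [mul_smul_comm, smul_mul_assoc]

/-- For `γ` real symmetric positive definite and `S` antisymmetric, with
`γ̃ = γ + S`, the map `y ↦ exp(−yγ̃) γ exp(−yγ̃ᵀ)` is Bochner integrable on `[0, ∞)` and
`2 ∫₀^∞ exp(−yγ̃) γ exp(−yγ̃ᵀ) dy = I`. -/
theorem fluctuation_dissipation_identity
    (n : ℕ) (hn : 1 ≤ n) (γ' S : Matrix (Fin n) (Fin n) ℝ)
    (hγ : γ'.PosDef) (hS : Sᵀ = -S) :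
    IntegrableOn
      (fun y : ℝ => NormedSpace.exp (-(y • (γ' + S))) * γ' *
        NormedSpace.exp (-(y • (γ' + S)ᵀ))) (Set.Ici 0) ∧
    (2 : ℝ) • (∫ y in Set.Ici (0 : ℝ),
        NormedSpace.exp (-(y • (γ' + S))) * γ' * NormedSpace.exp (-(y • (γ' + S)ᵀ))) =
      (1 : Matrix (Fin n) (Fin n) ℝ) :=
  fluctuation_dissipation_identity_general n γ' S hγ hS
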